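/- Let n ≥ 1, let k be an integer with 0 < k < n, let x ∈ ℝⁿ, and let ν* be the unique real root of g(ν) = ∑_{j=1}^n σ(x_j + ν) - k. Then the point y* with y*_i = σ(x_i + ν*) satisfies 0 < y*_i < 1 for all i and ∑_i y*_i = k, and y* is the unique minimizer of y ↦ -⟨x, y⟩ - H_b(y) over {y ∈ (0,1)ⁿ : ∑_i y_i = k}. -/

import Mathlib

open Real Finset

noncomputable def logistic (t : ℝ) : ℝ := 1 / (1 + Real.exp (-t))

noncomputable def binEnt {n : ℕ} (y : Fin n → ℝ) : ℝ :=
  -∑ i, (y i * Real.log (y i) + (1 - y i) * Real.log (1 - y i))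

noncomputable def lmlObj {n : ℕ} (x y : Fin n → ℝ) : ℝ :=
  -∑ i, x i * y i - binEnt y

/-!
The objective separates as `∑ᵢ h(yᵢ) - xᵢ yᵢ` with `h(a) = a log a + (1 - a) log (1 - a)`
strictly convex on `(0, 1)` and `h'(a) = log a - log (1 - a)`, the inverse of the logistic
function. Adding the multiplier term `ν (∑ yᵢ - k)`, which vanishes on the feasible set, the
problem decouples into the one-dimensional problems of minimising `h(w) - (xᵢ + ν) w`, each
solved exactly at `w = σ(xᵢ + ν)`. Strictness comes from Gibbs' inequality for Bernoulli
distributions, that is, from `log t < t - 1` for `t ≠ 1`.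
-/

lemma logistic_eq_sigmoid : logistic = Real.sigmoid := by
  ext t
  rw [logistic, one_div, Real.sigmoid_def]

lemma logistic_mem_Ioo (t : ℝ) : logistic t ∈ Set.Ioo (0 : ℝ) 1 := by
  rw [logistic_eq_sigmoid]
  exact ⟨Real.sigmoid_pos t, Real.sigmoid_lt_one t⟩

lemma log_logistic_sub_log_one_sub_logistic (t : ℝ) :
    Real.log (logistic t) - Real.log (1 - logistic t) = t := by
  have h : 1 - Real.sigmoid t = Real.sigmoid t * Real.exp (-t) := by
    rw [Real.sigmoid_mul_rexp_neg, Real.sigmoid_neg]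
  rw [logistic_eq_sigmoid, h, Real.log_mul (Real.sigmoid_pos t).ne' (Real.exp_pos _).ne',
    Real.log_exp]
  ring

lemma mul_log_sub_log_lt_sub {a b : ℝ} (ha : 0 < a) (hb : 0 < b) (hab : a ≠ b) :
    b * (Real.log a - Real.log b) < a - b := by
  have h := Real.log_lt_sub_one_of_pos (div_pos ha hb) (by rwa [Ne, div_eq_one_iff_eq hb.ne'])
  rw [Real.log_div ha.ne' hb.ne'] at h
  calc b * (Real.log a - Real.log b) < b * (a / b - 1) := mul_lt_mul_of_pos_left h hb
    _ = a - b := by field_simp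

lemma negBinEnt_sub_tangent_lt {a b : ℝ} (ha : a ∈ Set.Ioo (0 : ℝ) 1)
    (hb : b ∈ Set.Ioo (0 : ℝ) 1) (hab : a ≠ b) :
    a * Real.log a + (1 - a) * Real.log (1 - a) - (Real.log a - Real.log (1 - a)) * a
      < b * Real.log b + (1 - b) * Real.log (1 - b) - (Real.log a - Real.log (1 - a)) * b := by
  obtain ⟨ha0, ha1⟩ := ha
  obtain ⟨hb0, hb1⟩ := hb
  have h₀ := mul_log_sub_log_lt_sub ha0 hb0 hab
  have h₁ := mul_log_sub_log_lt_sub (sub_pos.2 ha1) (sub_pos.2 hb1)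
    (by intro h; apply hab; linarith)
  linarith

lemma negBinEnt_sub_tangent_le {a b : ℝ} (ha : a ∈ Set.Ioo (0 : ℝ) 1)
    (hb : b ∈ Set.Ioo (0 : ℝ) 1) :
    a * Real.log a + (1 - a) * Real.log (1 - a) - (Real.log a - Real.log (1 - a)) * a
      ≤ b * Real.log b + (1 - b) * Real.log (1 - b) - (Real.log a - Real.log (1 - a)) * b := by
  rcases eq_or_ne a b with rfl | hab
  · exact le_rfl
  · exact (negBinEnt_sub_tangent_lt ha hb hab).le

lemma lmlObj_eq_sum_add_mul_sum {n : ℕ} (x w : Fin n → ℝ) (ν : ℝ) :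
    lmlObj x w =
      ∑ i, (w i * Real.log (w i) + (1 - w i) * Real.log (1 - w i) - (x i + ν) * w i)
        + ν * ∑ i, w i := by
  simp only [lmlObj, binEnt, add_mul, Finset.sum_sub_distrib, Finset.sum_add_distrib,
    Finset.mul_sum]
  ring

lemma lmlObj_logistic_lt {n : ℕ} (x z : Fin n → ℝ) (ν : ℝ)
    (hz : ∀ i, z i ∈ Set.Ioo (0 : ℝ) 1)
    (hsum : ∑ i, z i = ∑ i, logistic (x i + ν)) (hne : z ≠ fun i => logistic (x i + ν)) :
    lmlObj x (fun i => logistic (x i + ν)) < lmlObj x z := by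
  set y : Fin n → ℝ := fun i => logistic (x i + ν)
  have hslope : ∀ i, Real.log (y i) - Real.log (1 - y i) = x i + ν := fun i =>
    log_logistic_sub_log_one_sub_logistic _
  obtain ⟨i₀, hi₀⟩ : ∃ i, y i ≠ z i := by
    by_contra! h
    exact hne (funext fun i => (h i).symm)
  rw [lmlObj_eq_sum_add_mul_sum x y ν, lmlObj_eq_sum_add_mul_sum x z ν, hsum,
    add_lt_add_iff_right]
  refine Finset.sum_lt_sum (fun i _ => ?_) ⟨i₀, Finset.mem_univ _, ?_⟩
  · rw [← hslope i]
    exact negBinEnt_sub_tangent_le (logistic_mem_Ioo _) (hz i)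
  · rw [← hslope i₀]
    exact negBinEnt_sub_tangent_lt (logistic_mem_Ioo _) (hz i₀) hi₀

theorem lml_solution_from_dual_root_general (n k : ℕ)
    (x : Fin n → ℝ) (ν : ℝ) (hroot : (∑ j, logistic (x j + ν)) - (k : ℝ) = 0) :
    (∀ i, logistic (x i + ν) ∈ Set.Ioo (0 : ℝ) 1) ∧
    (∑ i, logistic (x i + ν)) = k ∧
    ∀ z : Fin n → ℝ, ((∀ i, z i ∈ Set.Ioo (0 : ℝ) 1) ∧ ∑ i, z i = k) →
      z ≠ (fun i => logistic (x i + ν)) →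
        lmlObj x (fun i => logistic (x i + ν)) < lmlObj x z := by
  have hsum : ∑ i, logistic (x i + ν) = k := sub_eq_zero.1 hroot
  refine ⟨fun i => logistic_mem_Ioo _, hsum, ?_⟩
  rintro z ⟨hz, hzsum⟩ hne
  exact lmlObj_logistic_lt x z ν hz (hzsum.trans hsum.symm) hne

/-- if `ν*` is a root of `g(ν) = ∑_j σ(x_j + ν) - k`, then
`y*_i = σ(x_i + ν*)` is feasible and is the unique minimizer of the LML objective
over `{y ∈ (0,1)ⁿ : ∑ y_i = k}`. -/
theorem lml_solution_from_dual_root (n k : ℕ) (hn : 1 ≤ n) (hk : 0 < k) (hkn : k < n)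
    (x : Fin n → ℝ) (ν : ℝ) (hroot : (∑ j, logistic (x j + ν)) - (k : ℝ) = 0) :
    (∀ i, logistic (x i + ν) ∈ Set.Ioo (0 : ℝ) 1) ∧
    (∑ i, logistic (x i + ν)) = k ∧
    ∀ z : Fin n → ℝ, ((∀ i, z i ∈ Set.Ioo (0 : ℝ) 1) ∧ ∑ i, z i = k) →
      z ≠ (fun i => logistic (x i + ν)) →
        lmlObj x (fun i => logistic (x i + ν)) < lmlObj x z :=
  lml_solution_from_dual_root_general n k x ν hroot
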